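/- arXiv:1411.1227 — 2 statements merged into one kernel-verified Lean document; each statement's English description precedes it below -/
import Mathlib

section
/- Let I ⊂ ℤ[x_0,...,x_n] be a homogeneous ideal generated by forms F_0,...,F_m defining a projective scheme X over ℚ of pure codimension c, and let J be the ideal generated by the F_i together with all c × c minors of the Jacobian matrix (∂F_i/∂x_j). If for some prime p the scheme V(J mod p) ⊂ P^n over ℤ/(p) has codimension greater than n (i.e., is empty), then X is smooth over ℚ. -/
/-! Let `J ⊂ ℤ[x₀,…,xₙ]` be the Jacobian ideal. By the Nullstellensatz over `𝔽̄_p`, emptiness of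
`V(J mod p)` means `x_j ^ N ∈ J + p ℤ[x]` for all `j`, hence every form of degree
`M = (n + 1) N + 1` lies in `J + p ℤ[x]`. As `J` is homogeneous, the degree `M` part of `ℤ[x] / J`
is a finitely generated `ℤ`-module `P` with `P = p P`, so Nakayama gives `r ≡ 1 mod p` with
`r P = 0`. Then `r x_j ^ M ∈ J` with `r ≠ 0`, so over `ℚ̄` the only zero of `J` is the origin. -/

open MvPolynomial

attribute [local instance] MvPolynomial.gradedAlgebra

theorem Finsupp.exists_lt_apply_of_card_mul_lt_degree {σ : Type*} [Fintype σ] {N : ℕ}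
    {u : σ →₀ ℕ} (hu : Fintype.card σ * N < u.degree) : ∃ j, N < u j := by
  simpa using Finset.exists_lt_of_sum_lt (s := Finset.univ) (f := fun _ => N)
    (by simpa [Finsupp.degree_eq_sum] using hu)

namespace MvPolynomial

variable {σ R : Type*}

theorem exists_X_pow_mem_of_zeroLocus_subset_zero {k K : Type*} [Field k] [Field K]
    [Algebra k K] [IsAlgClosed K] [Finite σ] {I : Ideal (MvPolynomial σ k)}
    (h : zeroLocus K I ⊆ {0}) : ∃ N : ℕ, ∀ j, X j ^ N ∈ I := by
  have hX : Ideal.span (Set.range X) ≤ I.radical := by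
    rw [Ideal.span_le, ← vanishingIdeal_zeroLocus_eq_radical (K := K)]
    rintro _ ⟨j, rfl⟩ y hy
    simp [Set.mem_singleton_iff.1 (h hy)]
  obtain ⟨N, hN⟩ :=
    Ideal.exists_pow_le_of_le_radical_of_fg hX (Submodule.fg_span (Set.finite_range _))
  exact ⟨N, fun j => hN (Ideal.pow_mem_pow (Ideal.subset_span (Set.mem_range_self j)) N)⟩

theorem mem_sup_map_C_ker_of_map_mem {S : Type*} [CommRing R] [CommRing S] {f : R →+* S}
    (hf : Function.Surjective f) {J : Ideal (MvPolynomial σ R)} {g : MvPolynomial σ R}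
    (hg : map f g ∈ J.map (map f)) : g ∈ J ⊔ (RingHom.ker f).map C := by
  rwa [← ker_map, RingHom.ker_eq_comap_bot,
    ← Ideal.comap_map_of_surjective _ (map_surjective f hf)]

theorem IsHomogeneous.degree_eq_of_mem_support [CommSemiring R] {f : MvPolynomial σ R} {n : ℕ}
    (hf : f.IsHomogeneous n) {u : σ →₀ ℕ} (hu : u ∈ f.support) : u.degree = n :=
  not_ne_iff.1 fun h => mem_support_iff.1 hu (hf.coeff_eq_zero h)

section GradedNakayama

variable [CommRing R]

theorem IsHomogeneous.mem_smul_homogeneousSubmodule {I : Ideal R} {M : ℕ}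
    {f : MvPolynomial σ R} (hf : f.IsHomogeneous M) (hI : f ∈ I.map C) :
    f ∈ I • homogeneousSubmodule σ R M := by
  rw [f.as_sum]
  refine Submodule.sum_mem _ fun u hu => ?_
  rw [← mul_one (coeff u f), ← smul_eq_mul, ← smul_monomial]
  exact Submodule.smul_mem_smul (mem_map_C_iff.1 hI u)
    (isHomogeneous_monomial _ (hf.degree_eq_of_mem_support hu))

theorem homogeneousComponent_mem_map_C {I : Ideal R} (M : ℕ) {f : MvPolynomial σ R}
    (hI : f ∈ I.map C) : homogeneousComponent M f ∈ I.map C := by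
  rw [mem_map_C_iff] at hI ⊢
  intro u
  rw [coeff_homogeneousComponent]
  split_ifs
  exacts [hI u, I.zero_mem]

variable [Fintype σ]

theorem monomial_mem_of_X_pow_mem {I : Ideal (MvPolynomial σ R)} {N : ℕ}
    (hX : ∀ j, X j ^ N ∈ I) {u : σ →₀ ℕ} (hu : Fintype.card σ * N < u.degree) (a : R) :
    monomial u a ∈ I := by
  obtain ⟨j, hj⟩ := Finsupp.exists_lt_apply_of_card_mul_lt_degree hu
  rw [← add_tsub_cancel_of_le (Finsupp.single_le_iff.2 hj.le), ← one_mul a, ← monomial_mul,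
    ← X_pow_eq_monomial]
  exact I.mul_mem_right _ (hX j)

theorem IsHomogeneous.mem_of_X_pow_mem {I : Ideal (MvPolynomial σ R)} {N M : ℕ}
    (hX : ∀ j, X j ^ N ∈ I) (hM : Fintype.card σ * N < M) {f : MvPolynomial σ R}
    (hf : f.IsHomogeneous M) : f ∈ I := by
  rw [f.as_sum]
  refine I.sum_mem fun u hu => monomial_mem_of_X_pow_mem hX ?_ _
  rwa [hf.degree_eq_of_mem_support hu]

theorem exists_sub_one_mem_and_smul_mem_of_X_pow_mem {I : Ideal R}
    {J : Ideal (MvPolynomial σ R)} (hJ : J.IsHomogeneous (homogeneousSubmodule σ R)) {N : ℕ}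
    (hX : ∀ j, X j ^ N ∈ J ⊔ I.map C) :
    ∃ r : R, r - 1 ∈ I ∧
      ∀ f : MvPolynomial σ R, f.IsHomogeneous (Fintype.card σ * N + 1) → r • f ∈ J := by
  set M := Fintype.card σ * N + 1
  let π := (J.restrictScalars R).mkQ
  have hle : (homogeneousSubmodule σ R M).map π ≤ I • (homogeneousSubmodule σ R M).map π := by
    rw [← Submodule.map_smul'']
    rintro _ ⟨f, hf, rfl⟩
    -- `f = g + h` with `g ∈ J` and `h ∈ I[x]`; modulo `J` only the degree `M` part of `h` survives.
    obtain ⟨g, hg, h, hh, rfl⟩ :=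
      Submodule.mem_sup.1 (hf.mem_of_X_pow_mem hX (Nat.lt_succ_self _))
    have hgJ : homogeneousComponent M g ∈ J := decomposition.decompose'_apply g M ▸ hJ M hg
    refine ⟨homogeneousComponent M h, ?_, ?_⟩
    · exact (homogeneousComponent_isHomogeneous M h).mem_smul_homogeneousSubmodule
        (homogeneousComponent_mem_map_C M hh)
    · rw [eq_comm, ← sub_eq_zero, ← map_sub, Submodule.mkQ_apply, Submodule.Quotient.mk_eq_zero]
      rwa [← homogeneousComponent_eq_self hf, map_add, add_sub_cancel_right]
  obtain ⟨r, hr1, hr⟩ := Submodule.exists_sub_one_mem_and_smul_eq_zero_of_fg_of_le_smul I _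
    ((homogeneousSubmodule_fg σ R M).map _) hle
  refine ⟨r, hr1, fun f hf => ?_⟩
  have hrf := hr (π f) ⟨f, hf, rfl⟩
  rwa [← map_smul, Submodule.mkQ_apply, Submodule.Quotient.mk_eq_zero] at hrf

end GradedNakayama

section Jacobian

variable [CommRing R] {ι : Type*}

theorem isHomogeneous_det {n : Type*} [Fintype n] [DecidableEq n]
    {A : Matrix n n (MvPolynomial σ R)} {e : n → ℕ} (h : ∀ a b, (A a b).IsHomogeneous (e a)) :
    A.det.IsHomogeneous (∑ a, e a) := by
  rw [Matrix.det_apply]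
  refine IsHomogeneous.sum _ _ _ fun τ _ => ?_
  have hprod := IsHomogeneous.prod Finset.univ _ _ fun i _ => h (τ i) i
  rw [Equiv.sum_comp τ e] at hprod
  rw [Units.smul_def]
  exact Submodule.smul_of_tower_mem (homogeneousSubmodule σ R _) _ hprod

variable (F : ι → MvPolynomial σ R)

noncomputable def jacobianMinor {c : ℕ} (r : Fin c → ι) (s : Fin c → σ) : MvPolynomial σ R :=
  (Matrix.of fun a b => pderiv (s b) (F (r a))).det

variable (c : ℕ)

noncomputable def jacobianIdeal : Ideal (MvPolynomial σ R) :=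
  Ideal.span (Set.range F ∪
    Set.range fun rs : (Fin c → ι) × (Fin c → σ) => jacobianMinor F rs.1 rs.2)

theorem jacobianIdeal_isHomogeneous {d : ι → ℕ} (hF : ∀ i, (F i).IsHomogeneous (d i)) :
    (jacobianIdeal F c).IsHomogeneous (homogeneousSubmodule σ R) := by
  refine Ideal.homogeneous_span _ _ ?_
  rintro _ (⟨i, rfl⟩ | ⟨⟨r, s⟩, rfl⟩)
  · exact ⟨d i, hF i⟩
  · exact ⟨_, isHomogeneous_det fun a b => (hF (r a)).pderiv⟩

theorem jacobianIdeal_le_ker_eval₂Hom_iff {K : Type*} [CommRing K] (ψ : R →+* K) (x : σ → K) :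
    jacobianIdeal F c ≤ RingHom.ker (eval₂Hom ψ x) ↔
      (∀ i, eval x (map ψ (F i)) = 0) ∧
        ∀ (r : Fin c → ι) (s : Fin c → σ),
          (Matrix.of fun a b : Fin c => eval x (map ψ (pderiv (s b) (F (r a))))).det = 0 := by
  have hminor (r : Fin c → ι) (s : Fin c → σ) : eval₂Hom ψ x (jacobianMinor F r s) =
      (Matrix.of fun a b : Fin c => eval x (map ψ (pderiv (s b) (F (r a))))).det := by
    rw [jacobianMinor, RingHom.map_det]
    congr 1
    ext a b
    simp [eval_map]
  simp [jacobianIdeal, Ideal.span_le, Set.range_subset_iff, hminor, eval_map]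

end Jacobian

theorem le_ker_eval₂Hom_of_mem_zeroLocus_map {k K : Type*} [CommRing R] [Field k] [Field K]
    [Algebra k K] (f : R →+* k) {J : Ideal (MvPolynomial σ R)} {y : σ → K}
    (hy : y ∈ zeroLocus K (J.map (map f))) :
    J ≤ RingHom.ker (eval₂Hom ((algebraMap k K).comp f) y) := fun g hg => by
  simpa [aeval_def, eval₂_map] using hy _ (Ideal.mem_map_of_mem _ hg)

end MvPolynomial

theorem jacobian_criterion_mod_p_general (n m c : ℕ)
    (F : Fin m → MvPolynomial (Fin (n + 1)) ℤ) (d : Fin m → ℕ)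
    (hF : ∀ i, (F i).IsHomogeneous (d i))
    (p : ℕ) (hp : Fact p.Prime)
    (hmodp : ¬ ∃ x : Fin (n + 1) → AlgebraicClosure (ZMod p), x ≠ 0 ∧
        (∀ i, eval x (map (Int.castRingHom (AlgebraicClosure (ZMod p))) (F i)) = 0) ∧
        (∀ (r : Fin c → Fin m) (s : Fin c → Fin (n + 1)),
          (Matrix.of fun a b : Fin c =>
            eval x (map (Int.castRingHom (AlgebraicClosure (ZMod p)))
              (pderiv (s b) (F (r a))))).det = 0)) :
    ∀ x : Fin (n + 1) → AlgebraicClosure ℚ, x ≠ 0 →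
      (∀ i, eval x (map (Int.castRingHom (AlgebraicClosure ℚ)) (F i)) = 0) →
      ∃ (r : Fin c → Fin m) (s : Fin c → Fin (n + 1)),
        (Matrix.of fun a b : Fin c =>
          eval x (map (Int.castRingHom (AlgebraicClosure ℚ))
            (pderiv (s b) (F (r a))))).det ≠ 0 := by
  intro x hx0 hxF
  by_contra! hminors
  set J := jacobianIdeal F c
  have hJx : J ≤ RingHom.ker (eval₂Hom (Int.castRingHom _) x) :=
    (jacobianIdeal_le_ker_eval₂Hom_iff F c _ x).2 ⟨hxF, hminors⟩
  have hlocus :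
      zeroLocus (AlgebraicClosure (ZMod p)) (J.map (map (Int.castRingHom (ZMod p)))) ⊆ {0} := by
    intro y hy
    by_contra hy0
    have hJy := le_ker_eval₂Hom_of_mem_zeroLocus_map _ hy
    rw [RingHom.ext_int ((algebraMap _ _).comp _) (Int.castRingHom _)] at hJy
    exact hmodp ⟨y, hy0, (jacobianIdeal_le_ker_eval₂Hom_iff F c _ y).1 hJy⟩
  obtain ⟨N, hN⟩ := exists_X_pow_mem_of_zeroLocus_subset_zero hlocus
  have hX (j : Fin (n + 1)) : X j ^ N ∈ J ⊔ (RingHom.ker (Int.castRingHom (ZMod p))).map C :=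
    mem_sup_map_C_ker_of_map_mem ZMod.intCast_surjective (by simpa using hN j)
  obtain ⟨r, hr1, hr⟩ :=
    exists_sub_one_mem_and_smul_mem_of_X_pow_mem (jacobianIdeal_isHomogeneous F c hF) hX
  have hr0 : (r : AlgebraicClosure ℚ) ≠ 0 := Int.cast_ne_zero.2 (by rintro rfl; simp at hr1)
  apply hx0
  funext j
  have hrX := hJx (hr _ (isHomogeneous_X_pow j _))
  rw [RingHom.mem_ker, map_zsmul, map_pow, eval₂Hom_X', zsmul_eq_mul] at hrX
  simpa [hr0] using hrX

/-- Jacobian criterion with reduction mod `p`.  Let `I ⊂ ℤ[x₀,…,x_n]` be generated by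
homogeneous forms `F₀,…,F_{m-1}` defining a projective scheme `X` over `ℚ` of pure
codimension `c`, and let `J` be generated by the `Fᵢ` together with all `c × c` minors
of the Jacobian matrix `(∂Fᵢ/∂xⱼ)`.  If for some prime `p` the scheme `V(J mod p)` in
`ℙⁿ` over `ℤ/(p)` is empty (codimension `> n`), then `X` is smooth over `ℚ`: at every
point of `X` over `ℚ̄` some `c × c` minor of the Jacobian is nonvanishing. -/
theorem jacobian_criterion_mod_p (n m c : ℕ)
    (F : Fin m → MvPolynomial (Fin (n + 1)) ℤ) (d : Fin m → ℕ)
    (hF : ∀ i, (F i).IsHomogeneous (d i))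
    (hcodim : ringKrullDim (MvPolynomial (Fin (n + 1)) ℚ ⧸
        Ideal.span (Set.range fun i => map (Int.castRingHom ℚ) (F i))) = (n + 1 - c : ℕ))
    (p : ℕ) (hp : Fact p.Prime)
    (hmodp : ¬ ∃ x : Fin (n + 1) → AlgebraicClosure (ZMod p), x ≠ 0 ∧
        (∀ i, eval x (map (Int.castRingHom (AlgebraicClosure (ZMod p))) (F i)) = 0) ∧
        (∀ (r : Fin c → Fin m) (s : Fin c → Fin (n + 1)),
          (Matrix.of fun a b : Fin c =>
            eval x (map (Int.castRingHom (AlgebraicClosure (ZMod p)))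
              (pderiv (s b) (F (r a))))).det = 0)) :
    ∀ x : Fin (n + 1) → AlgebraicClosure ℚ, x ≠ 0 →
      (∀ i, eval x (map (Int.castRingHom (AlgebraicClosure ℚ)) (F i)) = 0) →
      ∃ (r : Fin c → Fin m) (s : Fin c → Fin (n + 1)),
        (Matrix.of fun a b : Fin c =>
          eval x (map (Int.castRingHom (AlgebraicClosure ℚ))
            (pderiv (s b) (F (r a))))).det ≠ 0 :=
  jacobian_criterion_mod_p_general n m c F d hF p hp hmodp
end

section
/- The 12 quadratic forms in 12 variables x_0,...,x_11 listed as: x_6x_10 − x_5x_11, x_1x_10 − x_4x_10 + x_3x_11, x_6x_8 − x_2x_11, x_5x_8 − x_2x_10, x_3x_8 − x_0x_10, x_1x_8 − x_4x_8 + x_0x_11, x_6x_7 − x_1x_9 + x_4x_9 − x_4x_11, x_5x_7 + x_3x_9 − x_4x_10, x_2x_7 − x_4x_8 + x_0x_9, x_1x_5 − x_4x_5 + x_3x_6, x_2x_3 − x_0x_5, x_1x_2 − x_2x_4 + x_0x_6 define a birational map ω : P^11 ⇢ P^11 whose inverse is also given by 12 quadratic forms; specifically, substituting the 12 listed forms of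 ω into the 12 quadratic forms of the claimed inverse (as listed in equation (2)) yields a tuple of the form (x_0·T, ..., x_11·T) for a single nonzero homogeneous polynomial T of degree 3. -/
open MvPolynomial

noncomputable section

/-- Coordinates `x₀, …, x₁₁` on `ℙ¹¹`. -/
abbrev xP11 : Fin 12 → MvPolynomial (Fin 12) ℚ := X

/-- The 12 quadrics of equation (1), defining the Cremona map `ω : ℙ¹¹ ⇢ ℙ¹¹`. -/
def omegaP11 : Fin 12 → MvPolynomial (Fin 12) ℚ :=
  ![xP11 6 * xP11 10 - xP11 5 * xP11 11,
    xP11 1 * xP11 10 - xP11 4 * xP11 10 + xP11 3 * xP11 11,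
    xP11 6 * xP11 8 - xP11 2 * xP11 11,
    xP11 5 * xP11 8 - xP11 2 * xP11 10,
    xP11 3 * xP11 8 - xP11 0 * xP11 10,
    xP11 1 * xP11 8 - xP11 4 * xP11 8 + xP11 0 * xP11 11,
    xP11 6 * xP11 7 - xP11 1 * xP11 9 + xP11 4 * xP11 9 - xP11 4 * xP11 11,
    xP11 5 * xP11 7 + xP11 3 * xP11 9 - xP11 4 * xP11 10,
    xP11 2 * xP11 7 - xP11 4 * xP11 8 + xP11 0 * xP11 9,
    xP11 1 * xP11 5 - xP11 4 * xP11 5 + xP11 3 * xP11 6,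
    xP11 2 * xP11 3 - xP11 0 * xP11 5,
    xP11 1 * xP11 2 - xP11 2 * xP11 4 + xP11 0 * xP11 6]

/-- The 12 quadrics of equation (2), the claimed inverse `ω⁻¹`. -/
def omegaInvP11 : Fin 12 → MvPolynomial (Fin 12) ℚ :=
  ![-(xP11 5 * xP11 10) + xP11 4 * xP11 11,
    xP11 5 * xP11 9 - xP11 8 * xP11 9 + xP11 6 * xP11 10 - xP11 1 * xP11 11 +
      xP11 7 * xP11 11,
    xP11 2 * xP11 10 + xP11 3 * xP11 11,
    xP11 4 * xP11 9 - xP11 1 * xP11 10,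
    -(xP11 8 * xP11 9) + xP11 6 * xP11 10 + xP11 7 * xP11 11,
    xP11 3 * xP11 9 + xP11 0 * xP11 10,
    xP11 2 * xP11 9 - xP11 0 * xP11 11,
    xP11 4 * xP11 6 + xP11 5 * xP11 7 - xP11 1 * xP11 8,
    xP11 2 * xP11 4 + xP11 3 * xP11 5,
    -(xP11 3 * xP11 6) + xP11 2 * xP11 7 - xP11 0 * xP11 8,
    xP11 1 * xP11 3 + xP11 0 * xP11 4,
    xP11 1 * xP11 2 - xP11 0 * xP11 5]

theorem isHomogeneous_X_mul_X {σ R : Type*} [CommSemiring R] (i j : σ) :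
    (X i * X j : MvPolynomial σ R).IsHomogeneous 2 :=
  (isHomogeneous_X R i).mul (isHomogeneous_X R j)

theorem omegaP11_isHomogeneous (j : Fin 12) : (omegaP11 j).IsHomogeneous 2 := by
  fin_cases j <;> simp only [omegaP11] <;>
    apply_rules [IsHomogeneous.add, IsHomogeneous.sub, isHomogeneous_X_mul_X]

def cubicP11 : MvPolynomial (Fin 12) ℚ :=
  X 8 * omegaP11 9 - X 10 * omegaP11 11 - X 11 * omegaP11 10

theorem cubicP11_isHomogeneous : cubicP11.IsHomogeneous 3 :=
  (((isHomogeneous_X ℚ 8).mul (omegaP11_isHomogeneous 9)).sub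
    ((isHomogeneous_X ℚ 10).mul (omegaP11_isHomogeneous 11))).sub
    ((isHomogeneous_X ℚ 11).mul (omegaP11_isHomogeneous 10))

theorem eval_cubicP11 :
    eval (fun i : Fin 12 => if i = 1 ∨ i = 5 ∨ i = 8 then 1 else 0) cubicP11 = 1 := by
  simp [cubicP11, omegaP11]

theorem cubicP11_ne_zero : cubicP11 ≠ 0 := fun h => by
  simpa [h] using eval_cubicP11

theorem aeval_omegaP11_omegaInvP11 (i : Fin 12) :
    aeval omegaP11 (omegaInvP11 i) = X i * cubicP11 := by
  fin_cases i <;>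
    simp only [omegaInvP11, omegaP11, cubicP11, map_add, map_sub, map_neg, map_mul, aeval_X,
      Matrix.cons_val, Matrix.cons_val_zero, Matrix.cons_val_one, Fin.reduceFinMk, Fin.isValue,
      Fin.zero_eta, Fin.mk_one] <;>
    ring

/-- The 12 quadrics of equation (1) define a birational self-map `ω` of `ℙ¹¹` whose
inverse is given by the 12 quadrics of equation (2): substituting the forms of `ω` into
those of `ω⁻¹` yields `(x₀·T, …, x₁₁·T)` for a single nonzero homogeneous cubic `T`. -/
theorem cremonaP11_inverse :
    ∃ T : MvPolynomial (Fin 12) ℚ, T ≠ 0 ∧ T.IsHomogeneous 3 ∧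
      ∀ i : Fin 12, aeval omegaP11 (omegaInvP11 i) = X i * T :=
  ⟨cubicP11, cubicP11_ne_zero, cubicP11_isHomogeneous, aeval_omegaP11_omegaInvP11⟩

end
end
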